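/- arXiv:2001.08270 — 9 statements merged into one kernel-verified Lean document; each statement's English description precedes it below -/
import Mathlib

section
/- Let G be a group with a T-valued 2-cocycle c, and let η, ξ be commuting elements of G. Then the following are equivalent: (1) c(ξ, η) = c(η, ξ); (2) c(ξη, η⁻¹) = c(η⁻¹, ξη); (3) c(ξ, η⁻¹) = c(η⁻¹, ξ); (4) c(ξη⁻¹, η) = c(η, ξη⁻¹). -/
/-!
Put `a(g, h) = c(g, h) / c(h, g)`. Three instances of the cocycle identity show that
`a(x * y, z) = a(x, z) * a(y, z)` whenever `z` commutes with `x` and `y`; since also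
`a(h, g) = a(g, h)⁻¹` and `a(g, g) = 1`, the four conditions say that `a(ξ, η)`, `a(ξ, η)⁻¹`,
`a(ξ, η)⁻¹` and `a(ξ, η)` equal `1`.
-/

section

variable {G T : Type*} [CommGroup T]

def cocycleCommutator (c : G → G → T) (g h : G) : T := c g h / c h g

namespace cocycleCommutator

variable {c : G → G → T}

theorem eq_one_iff {g h : G} : cocycleCommutator c g h = 1 ↔ c g h = c h g := div_eq_one

theorem swap (g h : G) : cocycleCommutator c h g = (cocycleCommutator c g h)⁻¹ :=
  (inv_div _ _).symm

theorem self (g : G) : cocycleCommutator c g g = 1 := div_self' _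

variable [Group G]

theorem mul_left (hc : ∀ g h k : G, c g (h * k) * c h k = c (g * h) k * c g h) {x y z : G}
    (hxz : Commute x z) (hyz : Commute y z) :
    cocycleCommutator c (x * y) z = cocycleCommutator c x z * cocycleCommutator c y z := by
  have hxyz : c x (z * y) * c y z = c (x * y) z * c x y := hyz.eq ▸ hc x y z
  have hzxy : c z (x * y) * c x y = c (x * z) y * c z x := hxz.eq ▸ hc z x y
  have hxzy : c x (z * y) / c (x * z) y = c x z / c z y :=
    div_eq_div_iff_mul_eq_mul.mpr ((hc x z y).trans (mul_comm _ _))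
  calc c (x * y) z / c z (x * y)
      = c (x * y) z * c x y / (c z (x * y) * c x y) := (mul_div_mul_right_eq_div _ _ _).symm
    _ = c x (z * y) / c (x * z) y * (c y z / c z x) := by rw [← hxyz, hzxy, div_mul_div_comm]
    _ = c x z / c z x * (c y z / c z y) := by
      rw [hxzy, div_mul_div_comm, div_mul_div_comm, mul_comm (c z y)]

theorem one_left (hc : ∀ g h k : G, c g (h * k) * c h k = c (g * h) k * c g h) (z : G) :
    cocycleCommutator c 1 z = 1 := by
  have h := mul_left hc (Commute.one_left z) (Commute.one_left z)
  rwa [one_mul, left_eq_mul] at h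

theorem inv_left (hc : ∀ g h k : G, c g (h * k) * c h k = c (g * h) k * c g h) {x z : G}
    (h : Commute x z) : cocycleCommutator c x⁻¹ z = (cocycleCommutator c x z)⁻¹ := by
  have h' := mul_left hc h.inv_left h
  rwa [inv_mul_cancel, one_left hc, eq_comm, mul_eq_one_iff_eq_inv] at h'

theorem inv_right (hc : ∀ g h k : G, c g (h * k) * c h k = c (g * h) k * c g h) {x z : G}
    (h : Commute x z) : cocycleCommutator c x z⁻¹ = (cocycleCommutator c x z)⁻¹ := by
  rw [swap, inv_left hc h.symm, inv_inv, swap]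

end cocycleCommutator

end

open cocycleCommutator in
theorem cocycle_comm_tfae_general {G : Type*} [Group G] (c : G → G → Circle)
    (hc : ∀ g h k : G, c g (h * k) * c h k = c (g * h) k * c g h)
    (η ξ : G) (hcomm : ξ * η = η * ξ) :
    [ c ξ η = c η ξ,
      c (ξ * η) η⁻¹ = c η⁻¹ (ξ * η),
      c ξ η⁻¹ = c η⁻¹ ξ,
      c (ξ * η⁻¹) η = c η (ξ * η⁻¹) ].TFAE := by
  have hξη : Commute ξ η := hcomm
  have hη : Commute η η := Commute.refl η
  have h2 : cocycleCommutator c (ξ * η) η⁻¹ = (cocycleCommutator c ξ η)⁻¹ := by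
    rw [mul_left hc hξη.inv_right hη.inv_right, inv_right hc hξη, inv_right hc hη, self, inv_one,
      mul_one]
  have h4 : cocycleCommutator c (ξ * η⁻¹) η = cocycleCommutator c ξ η := by
    rw [mul_left hc hξη hη.inv_left, inv_left hc hη, self, inv_one, mul_one]
  simp only [← eq_one_iff, h2, inv_right hc hξη, h4, inv_eq_one]
  tfae_finish

/-- The four symmetry conditions for a 2-cocycle at commuting elements are equivalent. -/
theorem cocycle_comm_tfae {G : Type*} [Group G] (c : G → G → Circle)
    (hc_right : ∀ g : G, c g 1 = 1) (hc_left : ∀ g : G, c 1 g = 1)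
    (hc : ∀ g h k : G, c g (h * k) * c h k = c (g * h) k * c g h)
    (η ξ : G) (hcomm : ξ * η = η * ξ) :
    [ c ξ η = c η ξ,
      c (ξ * η) η⁻¹ = c η⁻¹ (ξ * η),
      c ξ η⁻¹ = c η⁻¹ ξ,
      c (ξ * η⁻¹) η = c η (ξ * η⁻¹) ].TFAE :=
  cocycle_comm_tfae_general c hc η ξ hcomm
end

section
/- Let G be a group with a T-valued 2-cocycle c, let S be an abelian subgroup of G on which c is symmetric (i.e., c(s,t) = c(t,s) for all s,t ∈ S), and let η ∈ G commute with some s ∈ S. Then the following are equivalent: (1) c(s, η) = c(η, s); (2) for all t ∈ S, c(s, ηt) = c(ηt, s); (3) there exists t ∈ S with c(s, ηt) = c(ηt, s). -/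
/-! For fixed `s`, the map `g ↦ c s g / c g s` is multiplicative on the centralizer of `s`, and
symmetry of `c` on `S` makes it trivial on `S`; hence it takes the same value at `η` and at `η * t`
for every `t ∈ S`. -/

section

variable {G M : Type*} [Group G] [CommGroup M] (c : G → G → M)
  (hc : ∀ g h k : G, c g (h * k) * c h k = c (g * h) k * c g h)
include hc

theorem cocycle_div_swap_mul_right {s g h : G} (hg : g * s = s * g) (hh : h * s = s * h) :
    c s (g * h) / c (g * h) s = c s g / c g s * (c s h / c h s) := by
  rw [div_mul_div_comm, div_eq_div_iff_mul_eq_mul]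
  apply mul_left_cancel (a := c g h * c g (s * h))
  calc _ = (c s (g * h) * c g h) * (c g s * c h s * c g (s * h)) := by ac_rfl
    _ = (c (g * s) h * c g s) * c s g * c h s * c g (s * h) := by
      rw [hc, ← hg]; ac_rfl
    _ = c s g * c s h * (c g (h * s) * c h s) * c g (s * h) := by
      rw [← hc, hh]; ac_rfl
    _ = _ := by rw [hc]; ac_rfl

theorem cocycle_comm_mul_right_iff {s η t : G} (hη : η * s = s * η) (ht : t * s = s * t)
    (hst : c s t = c t s) : c s (η * t) = c (η * t) s ↔ c s η = c η s := by
  rw [← div_eq_one, cocycle_div_swap_mul_right c hc hη ht, hst, div_self', mul_one, div_eq_one]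

end

theorem cocycle_eta_equivalences_general {G : Type*} [Group G] (c : G → G → Circle)
    (hc : ∀ g h k : G, c g (h * k) * c h k = c (g * h) k * c g h)
    (S : Subgroup G)
    (hab : ∀ s ∈ S, ∀ t ∈ S, s * t = t * s)
    (hsym : ∀ s ∈ S, ∀ t ∈ S, c s t = c t s)
    (η : G) (s : G) (hs : s ∈ S) (hcomm : η * s = s * η) :
    [ c s η = c η s,
      ∀ t ∈ S, c s (η * t) = c (η * t) s,
      ∃ t ∈ S, c s (η * t) = c (η * t) s ].TFAE := by
  have key : ∀ t ∈ S, c s (η * t) = c (η * t) s ↔ c s η = c η s := fun t ht =>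
    cocycle_comm_mul_right_iff c hc hcomm (hab t ht s hs) (hsym s hs t ht)
  tfae_have 1 → 2 := fun h t ht => (key t ht).2 h
  tfae_have 2 → 3 := fun h => ⟨1, S.one_mem, h 1 S.one_mem⟩
  tfae_have 3 → 1 := fun ⟨t, ht, h⟩ => (key t ht).1 h
  tfae_finish

/-- Lemma on equivalent symmetry conditions relative to an abelian subgroup `S`
on which the 2-cocycle `c` is symmetric. -/
theorem cocycle_eta_equivalences {G : Type*} [Group G] (c : G → G → Circle)
    (hc_right : ∀ g : G, c g 1 = 1) (hc_left : ∀ g : G, c 1 g = 1)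
    (hc : ∀ g h k : G, c g (h * k) * c h k = c (g * h) k * c g h)
    (S : Subgroup G)
    (hab : ∀ s ∈ S, ∀ t ∈ S, s * t = t * s)
    (hsym : ∀ s ∈ S, ∀ t ∈ S, c s t = c t s)
    (η : G) (s : G) (hs : s ∈ S) (hcomm : η * s = s * η) :
    [ c s η = c η s,
      ∀ t ∈ S, c s (η * t) = c (η * t) s,
      ∃ t ∈ S, c s (η * t) = c (η * t) s ].TFAE :=
  cocycle_eta_equivalences_general c hc S hab hsym η s hs hcomm
end

section
/- Let G be a group with a T-valued 2-cocycle c, let S be a subgroup of G that is maximal among abelian subgroups on which c is symmetric, and let u be the identity. If η ∈ G satisfies ηs = sη and c(s, η) = c(η, s) for all s ∈ S, then η ∈ S. -/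
/-!
Call `x` and `y` *`c`-commuting* when they commute and `c x y = c y x`. For fixed `x`, the
`c`-commuting elements form a subgroup: on commuting arguments the cocycle identity makes the
antisymmetrisation `c x y / c y x` multiplicative in `y`. Hence a subgroup generated by pairwise
`c`-commuting elements is itself `c`-commutative, and adjoining `η` to `S` gives such a subgroup,
which by maximality cannot be larger than `S`.
-/

namespace TwoCocycle

variable {G A : Type*} [Group G] [CommGroup A] {c : G → G → A}
  (hc : ∀ g h k : G, c g (h * k) * c h k = c (g * h) k * c g h)
include hc

theorem one_right_eq_one_left (g : G) : c g 1 = c 1 g := by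
  have h₁ := hc g 1 1
  have h₂ := hc 1 1 g
  simp only [mul_one, one_mul, mul_left_cancel_iff] at h₁ h₂
  rw [← h₁, h₂]

theorem mul_swap_mul_right {x y z : G} (hxy : Commute x y) (hxz : Commute x z) :
    c x (y * z) * c y x * c z x = c (y * z) x * c x y * c x z := by
  have e₁ := hc x y z
  have e₂ := hc y z x
  have e₃ := hc y x z
  rw [← hxz.eq] at e₂
  rw [← hxy.eq] at e₃
  apply mul_right_cancel (b := c y z * c y (x * z) * c x z)
  calc c x (y * z) * c y x * c z x * (c y z * c y (x * z) * c x z)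
      = c x (y * z) * c y z * (c y (x * z) * c z x) * (c y x * c x z) := by ac_rfl
    _ = c (x * y) z * c x y * (c (y * z) x * c y z) * (c y x * c x z) := by rw [e₁, e₂]
    _ = c (y * z) x * c x y * c x z * (c y z * (c (x * y) z * c y x)) := by ac_rfl
    _ = c (y * z) x * c x y * c x z * (c y z * c y (x * z) * c x z) := by rw [← e₃]; ac_rfl

def centralizer (x : G) : Subgroup G where
  carrier := {y | Commute x y ∧ c x y = c y x}
  one_mem' := ⟨Commute.one_right x, one_right_eq_one_left hc x⟩
  mul_mem' := by
    rintro y z ⟨hxy, hcy⟩ ⟨hxz, hcz⟩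
    refine ⟨hxy.mul_right hxz, ?_⟩
    have h := mul_swap_mul_right hc hxy hxz
    rwa [hcy, hcz, mul_left_inj, mul_left_inj] at h
  inv_mem' := by
    rintro y ⟨hxy, hcy⟩
    refine ⟨hxy.inv_right, ?_⟩
    have h := mul_swap_mul_right hc hxy hxy.inv_right
    rwa [mul_inv_cancel, one_right_eq_one_left hc, hcy, mul_assoc, mul_assoc,
      mul_right_inj, mul_right_inj, eq_comm] at h

theorem mem_centralizer {x y : G} : y ∈ centralizer hc x ↔ Commute x y ∧ c x y = c y x :=
  Iff.rfl

theorem mem_centralizer_comm {x y : G} : y ∈ centralizer hc x ↔ x ∈ centralizer hc y := by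
  simp only [mem_centralizer, Commute.symm_iff (a := x), eq_comm (a := c x y)]

theorem mem_centralizer_of_mem_closure {s : Set G}
    (hs : ∀ x ∈ s, ∀ y ∈ s, y ∈ centralizer hc x) :
    ∀ x ∈ Subgroup.closure s, ∀ y ∈ Subgroup.closure s, y ∈ centralizer hc x := by
  have hgen : ∀ y ∈ s, Subgroup.closure s ≤ centralizer hc y := fun y hy =>
    (Subgroup.closure_le _).mpr fun x hx => (mem_centralizer_comm hc).mp (hs x hx y hy)
  intro x hx
  exact (Subgroup.closure_le _).mpr fun y hy => (mem_centralizer_comm hc).mp (hgen y hy hx)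

end TwoCocycle

theorem eta_in_S_general {G : Type*} [Group G] (c : G → G → Circle)
    (hc : ∀ g h k : G, c g (h * k) * c h k = c (g * h) k * c g h)
    (S : Subgroup G)
    (hab : ∀ s ∈ S, ∀ t ∈ S, s * t = t * s)
    (hsym : ∀ s ∈ S, ∀ t ∈ S, c s t = c t s)
    (hmax : ∀ T : Subgroup G, S < T →
      ¬((∀ s ∈ T, ∀ t ∈ T, s * t = t * s) ∧ (∀ s ∈ T, ∀ t ∈ T, c s t = c t s)))
    (η : G)
    (hcomm : ∀ s ∈ S, η * s = s * η)
    (hcsym : ∀ s ∈ S, c s η = c η s) :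
    η ∈ S := by
  by_contra hη
  set T := Subgroup.closure (insert η (S : Set G))
  have hST : S < T := SetLike.lt_iff_le_and_exists.mpr
    ⟨fun s hs => Subgroup.subset_closure (Set.mem_insert_of_mem η hs),
      η, Subgroup.subset_closure (Set.mem_insert η _), hη⟩
  have hgen : ∀ x ∈ insert η (S : Set G), ∀ y ∈ insert η (S : Set G),
      y ∈ TwoCocycle.centralizer hc x := by
    simp only [Set.forall_mem_insert, SetLike.mem_coe]
    exact ⟨⟨⟨Commute.refl η, rfl⟩, fun s hs => ⟨hcomm s hs, (hcsym s hs).symm⟩⟩,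
      fun s hs => ⟨⟨(hcomm s hs).symm, hcsym s hs⟩, fun t ht => ⟨hab s hs t ht, hsym s hs t ht⟩⟩⟩
  have hT := TwoCocycle.mem_centralizer_of_mem_closure hc hgen
  exact hmax T hST ⟨fun s hs t ht => (hT s hs t ht).1, fun s hs t ht => (hT s hs t ht).2⟩

/-- If `S` is maximal among abelian subgroups of `G` on which the 2-cocycle `c` is
symmetric, and `η` commutes with all of `S` with `c(s, η) = c(η, s)` for all `s ∈ S`,
then `η ∈ S`. -/
theorem eta_in_S {G : Type*} [Group G] (c : G → G → Circle)
    (hc_right : ∀ g : G, c g 1 = 1) (hc_left : ∀ g : G, c 1 g = 1)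
    (hc : ∀ g h k : G, c g (h * k) * c h k = c (g * h) k * c g h)
    (S : Subgroup G)
    (hab : ∀ s ∈ S, ∀ t ∈ S, s * t = t * s)
    (hsym : ∀ s ∈ S, ∀ t ∈ S, c s t = c t s)
    (hmax : ∀ T : Subgroup G, S < T →
      ¬((∀ s ∈ T, ∀ t ∈ T, s * t = t * s) ∧ (∀ s ∈ T, ∀ t ∈ T, c s t = c t s)))
    (η : G)
    (hcomm : ∀ s ∈ S, η * s = s * η)
    (hcsym : ∀ s ∈ S, c s η = c η s) :
    η ∈ S :=
  eta_in_S_general c hc S hab hsym hmax η hcomm hcsym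
end

section
/- On the group G = ℤ⁵ with multiplication a·b = (a₁+b₁+2a₅b₃, a₂+b₂+2a₅b₄, a₃+b₃, a₄+b₄, a₅+b₅), the function c(a, b) = (−1)^{a₄b₁} is a 2-cocycle: c(a, e) = c(e, a) = 1 and c(a, bc')c(b, c') = c(ab, c')c(a, b) for all a, b, c' ∈ G. -/
/-! Write `c(a, b) = (-1)^β(a, b)` with `β(a, b) = a₄ b₁`. Modulo 2 the first coordinate of a
product is additive, since the twisting term `2 a₅ b₃` is even; so `β` is biadditive modulo 2,
hence an additive 2-cocycle modulo 2, and `(-1)^β` only depends on `β` modulo 2. -/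

abbrev V : Type := ℤ × ℤ × ℤ × ℤ × ℤ

def gmul (a b : V) : V :=
  (a.1 + b.1 + 2 * a.2.2.2.2 * b.2.2.1,
   a.2.1 + b.2.1 + 2 * a.2.2.2.2 * b.2.2.2.1,
   a.2.2.1 + b.2.2.1,
   a.2.2.2.1 + b.2.2.2.1,
   a.2.2.2.2 + b.2.2.2.2)

def ge : V := (0, 0, 0, 0, 0)

def ginv (a : V) : V :=
  (2 * a.2.2.1 * a.2.2.2.2 - a.1,
   2 * a.2.2.2.1 * a.2.2.2.2 - a.2.1,
   -a.2.2.1, -a.2.2.2.1, -a.2.2.2.2)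

noncomputable def cc (a b : V) : ℂ := (-1 : ℂ) ^ (a.2.2.2.1 * b.1)

theorem neg_one_zpow_eq_of_modEq {α : Type*} [DivisionMonoid α] [HasDistribNeg α] {m n : ℤ}
    (h : m ≡ n [ZMOD 2]) : (-1 : α) ^ m = (-1 : α) ^ n := by
  simp only [neg_one_zpow_eq_ite, Int.even_iff, h.eq]

theorem neg_one_zpow_mul_eq_of_modEq {K : Type*} [DivisionRing K] {m n p q : ℤ}
    (h : m + n ≡ p + q [ZMOD 2]) :
    (-1 : K) ^ m * (-1 : K) ^ n = (-1 : K) ^ p * (-1 : K) ^ q := by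
  have hne : (-1 : K) ≠ 0 := neg_ne_zero.mpr one_ne_zero
  rw [← zpow_add₀ hne, ← zpow_add₀ hne]
  exact neg_one_zpow_eq_of_modEq h

theorem gmul_fst_modEq (a b : V) : (gmul a b).1 ≡ a.1 + b.1 [ZMOD 2] :=
  Int.modEq_iff_dvd.mpr ⟨-(a.2.2.2.2 * b.2.2.1), by simp only [gmul]; ring⟩

theorem cc_exponent_cocycle_modEq (a b d : V) :
    a.2.2.2.1 * (gmul b d).1 + b.2.2.2.1 * d.1 ≡
      (gmul a b).2.2.2.1 * d.1 + a.2.2.2.1 * b.1 [ZMOD 2] :=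
  calc a.2.2.2.1 * (gmul b d).1 + b.2.2.2.1 * d.1
      ≡ a.2.2.2.1 * (b.1 + d.1) + b.2.2.2.1 * d.1 [ZMOD 2] :=
        ((gmul_fst_modEq b d).mul_left _).add_right _
    _ = (gmul a b).2.2.2.1 * d.1 + a.2.2.2.1 * b.1 := by simp only [gmul]; ring

/-- `c(a,b) = (-1)^{a₄ b₁}` is a 2-cocycle on the group `ℤ⁵` with the given law. -/
theorem z5_cocycle :
    (∀ a : V, cc a ge = 1 ∧ cc ge a = 1) ∧
    (∀ a b d : V, cc a (gmul b d) * cc b d = cc (gmul a b) d * cc a b) := by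
  refine ⟨fun a => ⟨by simp [cc, ge], by simp [cc, ge]⟩, fun a b d => ?_⟩
  exact neg_one_zpow_mul_eq_of_modEq (cc_exponent_cocycle_modEq a b d)
end

section
/- In the group G = ℤ⁵ with multiplication a·b = (a₁+b₁+2a₅b₃, a₂+b₂+2a₅b₄, a₃+b₃, a₄+b₄, a₅+b₅), for any positive integer j and any g ∈ G, g^j = (jg₁ + j(j−1)g₅g₃, jg₂ + j(j−1)g₅g₄, jg₃, jg₄, jg₅). Consequently G has the unique root property: g^j = h^j for some positive integer j implies g = h. -/
def gpow (g : V) : ℕ → V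
  | 0 => ge
  | n + 1 => gmul g (gpow g n)

theorem gpow_eq (j : ℕ) (g : V) :
    gpow g j =
      ((j : ℤ) * g.1 + (j : ℤ) * ((j : ℤ) - 1) * g.2.2.2.2 * g.2.2.1,
       (j : ℤ) * g.2.1 + (j : ℤ) * ((j : ℤ) - 1) * g.2.2.2.2 * g.2.2.2.1,
       (j : ℤ) * g.2.2.1, (j : ℤ) * g.2.2.2.1, (j : ℤ) * g.2.2.2.2) := by
  induction j with
  | zero => simp [gpow, ge]
  | succ n ih =>
    simp only [gpow, ih, gmul, Prod.mk.injEq]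
    push_cast
    refine ⟨?_, ?_, ?_, ?_, ?_⟩ <;> ring

theorem gpow_left_injective {j : ℕ} (hj : j ≠ 0) : Function.Injective (gpow · j) := by
  rintro ⟨a₁, a₂, a₃, a₄, a₅⟩ ⟨b₁, b₂, b₃, b₄, b₅⟩ hab
  have hj : (j : ℤ) ≠ 0 := by exact_mod_cast hj
  simp only [gpow_eq, Prod.mk.injEq] at hab ⊢
  obtain ⟨h₁, h₂, h₃, h₄, h₅⟩ := hab
  obtain rfl := mul_left_cancel₀ hj h₃
  obtain rfl := mul_left_cancel₀ hj h₄
  obtain rfl := mul_left_cancel₀ hj h₅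
  -- now that `g₃, g₄, g₅` agree, the `j (j - 1)` correction terms cancel
  exact ⟨mul_left_cancel₀ hj (add_right_cancel h₁), mul_left_cancel₀ hj (add_right_cancel h₂),
    rfl, rfl, rfl⟩

/-- Powers in the group `ℤ⁵` are given by the stated formula, and consequently the
group has the unique root property. -/
theorem z5_pow_and_unique_root :
    (∀ j : ℕ, 0 < j → ∀ g : V,
      gpow g j =
        ((j : ℤ) * g.1 + (j : ℤ) * ((j : ℤ) - 1) * g.2.2.2.2 * g.2.2.1,
         (j : ℤ) * g.2.1 + (j : ℤ) * ((j : ℤ) - 1) * g.2.2.2.2 * g.2.2.2.1,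
         (j : ℤ) * g.2.2.1, (j : ℤ) * g.2.2.2.1, (j : ℤ) * g.2.2.2.2)) ∧
    (∀ g h : V, ∀ j : ℕ, 0 < j → gpow g j = gpow h j → g = h) :=
  ⟨fun j _ g => gpow_eq j g, fun _ _ _ hj hgh => gpow_left_injective hj.ne' hgh⟩
end

section
/- In the group G = ℤ⁵ with multiplication a·b = (a₁+b₁+2a₅b₃, a₂+b₂+2a₅b₄, a₃+b₃, a₄+b₄, a₅+b₅), equipped with the 2-cocycle c(a,b) = (−1)^{a₄b₁}, the subgroup S₁ = ℤ×ℤ×ℤ×2ℤ×{0} is maximal among abelian subgroups on which c is symmetric: S₁ is abelian, c is symmetric (indeed trivial) on S₁, and any subgroup strictly containing S₁ either fails to be abelian or has non-symmetric c. -/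
def S1 : Set V := {a | (∃ k : ℤ, a.2.2.2.1 = 2 * k) ∧ a.2.2.2.2 = 0}

def IsSubgrp (T : Set V) : Prop :=
  ge ∈ T ∧ (∀ a ∈ T, ∀ b ∈ T, gmul a b ∈ T) ∧ (∀ a ∈ T, ginv a ∈ T)

/-!
Elements with vanishing fifth coordinate commute, and `c(a, b) = 1` as soon as `a₄` is even;
this gives the first three claims. For maximality, an element `t` outside `S₁` has either
`t₅ ≠ 0`, and then `t` does not commute with `e₃ ∈ S₁`, or `t₄` odd, and then
`c(t, e₁) = -1 ≠ 1 = c(e₁, t)` for `e₁ ∈ S₁`.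
-/

lemma mem_S1_iff {a : V} : a ∈ S1 ↔ Even a.2.2.2.1 ∧ a.2.2.2.2 = 0 := by
  rw [even_iff_exists_two_mul]; rfl

lemma isSubgrp_S1 : IsSubgrp S1 := by
  refine ⟨mem_S1_iff.2 ⟨Even.zero, rfl⟩, ?_, ?_⟩
  · rintro a ⟨ha4, ha5⟩ b ⟨hb4, hb5⟩
    rw [← even_iff_exists_two_mul] at ha4 hb4
    exact mem_S1_iff.2 ⟨ha4.add hb4, by simp [gmul, ha5, hb5]⟩
  · rintro a ⟨ha4, ha5⟩
    rw [← even_iff_exists_two_mul] at ha4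
    exact mem_S1_iff.2 ⟨ha4.neg, by simp [ginv, ha5]⟩

lemma gmul_comm_of_fifth_eq_zero {a b : V} (ha : a.2.2.2.2 = 0) (hb : b.2.2.2.2 = 0) :
    gmul a b = gmul b a := by
  simp only [gmul, ha, hb, mul_zero, zero_mul, add_zero]
  ext <;> simp only [add_comm]

lemma cc_eq_one_of_even {a : V} (ha : Even a.2.2.2.1) (b : V) : cc a b = 1 :=
  (ha.mul_right b.1).neg_one_zpow

lemma fifth_eq_zero_of_gmul_comm {a : V} (h : gmul a (0, 0, 1, 0, 0) = gmul (0, 0, 1, 0, 0) a) :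
    a.2.2.2.2 = 0 := by
  simp only [gmul, Prod.mk.injEq] at h
  omega

lemma even_fourth_of_cc_symm {a : V} (h : cc a (1, 0, 0, 0, 0) = cc (1, 0, 0, 0, 0) a) :
    Even a.2.2.2.1 := by
  by_contra hodd
  simp only [cc, mul_one, zero_mul, zpow_zero,
    (Int.not_even_iff_odd.1 hodd).neg_one_zpow] at h
  norm_num at h

lemma subset_S1_of_comm_of_cc_symm {T : Set V} (hS1 : S1 ⊆ T)
    (hcomm : ∀ a ∈ T, ∀ b ∈ T, gmul a b = gmul b a) (hsymm : ∀ a ∈ T, ∀ b ∈ T, cc a b = cc b a) :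
    T ⊆ S1 := fun t ht =>
  mem_S1_iff.2
    ⟨even_fourth_of_cc_symm (hsymm t ht _ (hS1 (mem_S1_iff.2 ⟨Even.zero, rfl⟩))),
     fifth_eq_zero_of_gmul_comm (hcomm t ht _ (hS1 (mem_S1_iff.2 ⟨Even.zero, rfl⟩)))⟩

/-- `S₁` is maximal among abelian subgroups of `ℤ⁵` on which the 2-cocycle `c` is
symmetric; in fact `c` is trivial on `S₁`. -/
theorem z5_S1_maximal :
    IsSubgrp S1 ∧
    (∀ s ∈ S1, ∀ t ∈ S1, gmul s t = gmul t s) ∧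
    (∀ s ∈ S1, ∀ t ∈ S1, cc s t = 1) ∧
    (∀ T : Set V, IsSubgrp T → S1 ⊆ T → S1 ≠ T →
      ¬(∀ a ∈ T, ∀ b ∈ T, gmul a b = gmul b a) ∨
      ¬(∀ a ∈ T, ∀ b ∈ T, cc a b = cc b a)) := by
  refine ⟨isSubgrp_S1, fun s hs t ht => ?_, fun s hs t _ => ?_, fun T _ hS1 hne => ?_⟩
  · exact gmul_comm_of_fifth_eq_zero (mem_S1_iff.1 hs).2 (mem_S1_iff.1 ht).2
  · exact cc_eq_one_of_even (mem_S1_iff.1 hs).1 t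
  · by_contra! h
    exact hne (hS1.antisymm (subset_S1_of_comm_of_cc_symm hS1 h.1 h.2))
end

section
/- In the group G = ℤ⁵ with multiplication a·b = (a₁+b₁+2a₅b₃, a₂+b₂+2a₅b₄, a₃+b₃, a₄+b₄, a₅+b₅) and 2-cocycle c(a,b) = (−1)^{a₄b₁}, for any g ∈ G and s in the subgroup S₁ = ℤ×ℤ×ℤ×2ℤ×{0}: (conj{c(g,g⁻¹)})·c(g⁻¹, s)·c(g⁻¹s, g) = (−1)^{g₄s₁} = c(g, s). -/
lemma neg_one_zpow_eq_of_even_sub {α : Type*} [DivisionRing α] {m n : ℤ} (h : Even (m - n)) :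
    (-1 : α) ^ m = (-1 : α) ^ n := by
  rw [← sub_add_cancel m n, zpow_add₀ (neg_ne_zero.mpr one_ne_zero), h.neg_one_zpow, one_mul]

lemma conj_cc (a b : V) : starRingEnd ℂ (cc a b) = cc a b := by
  simp [cc]

/-- For `g ∈ G` and `s ∈ S₁`:
`conj(c(g,g⁻¹)) c(g⁻¹,s) c(g⁻¹s,g) = (-1)^{g₄ s₁} = c(g,s)`. -/
theorem z5_cocycle_computation (g s : V) (hs : s ∈ S1) :
    (starRingEnd ℂ) (cc g (ginv g)) * cc (ginv g) s * cc (gmul (ginv g) s) g =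
      (-1 : ℂ) ^ (g.2.2.2.1 * s.1) ∧
    (-1 : ℂ) ^ (g.2.2.2.1 * s.1) = cc g s := by
  obtain ⟨⟨k, hk⟩, -⟩ := hs
  refine ⟨?_, rfl⟩
  rw [conj_cc]
  simp only [cc, ginv, gmul]
  rw [← zpow_add₀ (neg_ne_zero.mpr one_ne_zero), ← zpow_add₀ (neg_ne_zero.mpr one_ne_zero)]
  apply neg_one_zpow_eq_of_even_sub
  -- the exponents differ by 2(g₃g₄g₅ - g₁g₄ + kg₁ - g₄s₁); s₄ = 2k makes the cross term s₄g₁ even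
  rw [hk]
  exact ⟨g.2.2.1 * g.2.2.2.1 * g.2.2.2.2 - g.1 * g.2.2.2.1 + k * g.1 - g.2.2.2.1 * s.1, by ring⟩
end

section
/- Let H = ℤ/4ℤ × ℤ/4ℤ × ℤ × ℤ × ℤ/4ℤ with multiplication (a,b,c,d,e)·(a',b',c',d',e') = (a+a'+2ec', b+b'+2ed', c+c', d+d', e+e'). Then H is a group with inverse (a,b,c,d,e)⁻¹ = (2ec−a, 2ed−b, −c, −d, −e), and the function σ((a,b,c,d,e),(a',b',c',d',e')) = (−1)^{da'} is a 2-cocycle on H (where the exponent da' is computed using any integer representative of a' in ℤ/4ℤ, which is well-defined since (−1)^{d·a'} depends only on a' mod 2). -/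
abbrev HV : Type := ZMod 4 × ZMod 4 × ℤ × ℤ × ZMod 4

def hmul (a b : HV) : HV :=
  (a.1 + b.1 + 2 * a.2.2.2.2 * (b.2.2.1 : ZMod 4),
   a.2.1 + b.2.1 + 2 * a.2.2.2.2 * (b.2.2.2.1 : ZMod 4),
   a.2.2.1 + b.2.2.1,
   a.2.2.2.1 + b.2.2.2.1,
   a.2.2.2.2 + b.2.2.2.2)

def he : HV := (0, 0, 0, 0, 0)

def hinv (a : HV) : HV :=
  (2 * a.2.2.2.2 * (a.2.2.1 : ZMod 4) - a.1,
   2 * a.2.2.2.2 * (a.2.2.2.1 : ZMod 4) - a.2.1,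
   -a.2.2.1, -a.2.2.2.1, -a.2.2.2.2)

noncomputable def sigma (a b : HV) : ℂ :=
  (-1 : ℂ) ^ (a.2.2.2.1 * ((b.1.val : ℤ)))

lemma neg_one_zpow_congr {m n : ℤ} (h : m ≡ n [ZMOD 2]) : (-1 : ℂ) ^ m = (-1 : ℂ) ^ n := by
  rw [Int.ModEq] at h
  rcases Int.even_or_odd m with hm | hm
  · have hn : Even n := by rw [Int.even_iff] at hm ⊢; omega
    rw [hm.neg_one_zpow, hn.neg_one_zpow]
  · have hn : Odd n := by rw [Int.odd_iff] at hm ⊢; omega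
    rw [hm.neg_one_zpow, hn.neg_one_zpow]

lemma val_add_add_two (x y z : ZMod 4) :
    ((x + y + 2 * z).val : ℤ) ≡ (x.val : ℤ) + (y.val : ℤ) [ZMOD 2] := by
  have key : ∀ x y z : ZMod 4, ((x + y + 2 * z).val) % 2 = (x.val + y.val) % 2 := by decide
  have := key x y z
  rw [Int.ModEq]
  omega

theorem h_group_and_cocycle' :
    (∀ a b c : HV, hmul (hmul a b) c = hmul a (hmul b c)) ∧
    (∀ a : HV, hmul a he = a ∧ hmul he a = a) ∧
    (∀ a : HV, hmul a (hinv a) = he ∧ hmul (hinv a) a = he) ∧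
    (∀ a : HV, sigma a he = 1 ∧ sigma he a = 1) ∧
    (∀ a b d : HV, sigma a (hmul b d) * sigma b d = sigma (hmul a b) d * sigma a b) := by
  refine ⟨?_, ?_, ?_, ?_, ?_⟩
  · rintro ⟨a1, a2, a3, a4, a5⟩ ⟨b1, b2, b3, b4, b5⟩ ⟨c1, c2, c3, c4, c5⟩
    simp only [hmul, Prod.mk.injEq]
    refine ⟨?_, ?_, by ring, by ring, by ring⟩ <;> push_cast <;> ring
  · rintro ⟨a1, a2, a3, a4, a5⟩
    constructor <;> simp [hmul, he]
  · rintro ⟨a1, a2, a3, a4, a5⟩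
    constructor
    · simp only [hmul, hinv, he, Prod.mk.injEq]; push_cast; and_intros <;> ring
    · simp only [hmul, hinv, he, Prod.mk.injEq]; push_cast; and_intros <;> ring
  · intro a
    constructor
    · simp [sigma, he]
    · simp [sigma, he]
  · rintro ⟨a1, a2, a3, a4, a5⟩ ⟨b1, b2, b3, b4, b5⟩ ⟨d1, d2, d3, d4, d5⟩
    simp only [sigma, hmul]
    rw [← zpow_add₀ (by norm_num : (-1:ℂ) ≠ 0), ← zpow_add₀ (by norm_num : (-1:ℂ) ≠ 0)]
    apply neg_one_zpow_congr
    have h1 := val_add_add_two b1 d1 (b5 * (d3 : ZMod 4))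
    rw [← mul_assoc] at h1
    calc a4 * ((b1 + d1 + 2 * b5 * (d3 : ZMod 4)).val : ℤ) + b4 * (d1.val : ℤ)
        ≡ a4 * ((b1.val : ℤ) + (d1.val : ℤ)) + b4 * (d1.val : ℤ) [ZMOD 2] :=
          ((h1.mul_left a4).add_right _)
      _ = (a4 + b4) * (d1.val : ℤ) + a4 * (b1.val : ℤ) := by ring

/-- `H = ℤ/4 × ℤ/4 × ℤ × ℤ × ℤ/4` with the given multiplication is a group with
the stated inverse, and `σ(a,b) = (-1)^{d a₁'}` is a 2-cocycle on it. -/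
theorem h_group_and_cocycle :
    (∀ a b c : HV, hmul (hmul a b) c = hmul a (hmul b c)) ∧
    (∀ a : HV, hmul a he = a ∧ hmul he a = a) ∧
    (∀ a : HV, hmul a (hinv a) = he ∧ hmul (hinv a) a = he) ∧
    (∀ a : HV, sigma a he = 1 ∧ sigma he a = 1) ∧
    (∀ a b d : HV, sigma a (hmul b d) * sigma b d = sigma (hmul a b) d * sigma a b) :=
  h_group_and_cocycle'
end

section
/- In the group H = ℤ/4ℤ × ℤ/4ℤ × ℤ × ℤ × ℤ/4ℤ with multiplication (a,b,c,d,e)·(a',b',c',d',e') = (a+a'+2ec', b+b'+2ed', c+c', d+d', e+e'), let ν = (0,0,0,0,1) and μ = (2,0,0,0,1), and let S = ℤ/4ℤ × ℤ/4ℤ × ℤ × 2ℤ × {0,2}. The element ν is 2-centralizing but not 1-centralizing for S: there exists s ∈ S with νs ≠ sν, but νs² = s²ν for all s ∈ S. -/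
def SH : Set HV :=
  {a | (∃ k : ℤ, a.2.2.2.1 = 2 * k) ∧ (a.2.2.2.2 = 0 ∨ a.2.2.2.2 = 2)}

def nu : HV := (0, 0, 0, 0, 1)

/-
Left multiplication by `ν` adds `2c` and `2d` to the first two coordinates, while right
multiplication by `ν` does not, so `ν` commutes with `s = (a,b,c,d,e)` exactly when `c` and `d`
are even. The coordinates `c` and `d` of a square are `2c` and `2d`, so `ν` commutes
with every square of `H`; on the other hand `(0,0,1,0,0) ∈ S` does not commute with `ν`.
-/

lemma hmul_nu_left (s : HV) :
    hmul nu s = (s.1 + 2 * (s.2.2.1 : ZMod 4), s.2.1 + 2 * (s.2.2.2.1 : ZMod 4),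
      s.2.2.1, s.2.2.2.1, 1 + s.2.2.2.2) := by
  simp [hmul, nu]

lemma hmul_nu_right (s : HV) :
    hmul s nu = (s.1, s.2.1, s.2.2.1, s.2.2.2.1, s.2.2.2.2 + 1) := by
  simp [hmul, nu]

lemma hmul_nu_eq_iff (s : HV) :
    hmul nu s = hmul s nu ↔ 2 * (s.2.2.1 : ZMod 4) = 0 ∧ 2 * (s.2.2.2.1 : ZMod 4) = 0 := by
  simp only [hmul_nu_left, hmul_nu_right, Prod.mk.injEq, add_eq_left, add_comm (1 : ZMod 4)]
  tauto

lemma two_mul_intCast_add_self (n : ℤ) : 2 * ((n + n : ℤ) : ZMod 4) = 0 := by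
  push_cast
  rw [← two_mul, ← mul_assoc, show (2 * 2 : ZMod 4) = 0 from rfl, zero_mul]

lemma hmul_nu_hmul_self (s : HV) : hmul nu (hmul s s) = hmul (hmul s s) nu :=
  (hmul_nu_eq_iff _).2 ⟨two_mul_intCast_add_self _, two_mul_intCast_add_self _⟩

/-- `ν = (0,0,0,0,1)` is 2-centralizing but not 1-centralizing for `S`. -/
theorem nu_two_centralizing_not_one :
    (∃ s ∈ SH, hmul nu s ≠ hmul s nu) ∧
    (∀ s ∈ SH, hmul nu (hmul s s) = hmul (hmul s s) nu) := by
  refine ⟨⟨(0, 0, 1, 0, 0), ⟨⟨0, rfl⟩, Or.inl rfl⟩, ?_⟩, fun s _ ↦ hmul_nu_hmul_self s⟩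
  rw [Ne, hmul_nu_eq_iff]
  decide
end
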